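/- arXiv:1103.5182 — 6 statements merged into one kernel-verified Lean document; each statement's English description precedes it below -/
import Mathlib

section
/- Let s ≥ 1 be an integer and let α_v = (-1)^{v+1} (s!)^2 / (v (s+v)! (s-v)!) for v = 1,…,s. Then Σ_{v=1}^{s} α_v v = 1/2, and Σ_{v=1}^{s} α_v v^{2j+1} = 0 for every integer j with 1 ≤ j ≤ s-1. -/
/-!
Up to the factor `-1 / (2s choose s)`, `α_v · v` is the signed binomial coefficient
`(-1)^v (2s choose s+v)`. The `2s`-th forward difference of `x ↦ x^(2j)` vanishes for `2j < 2s`,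
which, centred at `x = -s`, reads `∑_{m=-s}^{s} (-1)^m (2s choose s+m) m^(2j) = 0`. Folding the sum
at `m = 0`, the two halves contribute equally, and the middle term `(2s choose s) · 0^(2j)` is
nonzero only for `j = 0`.
-/

open Finset

theorem sum_range_two_mul_add_one_eq_add_sum_Icc {M : Type*} [AddCommMonoid M] (f : ℕ → M)
    (s : ℕ) : ∑ k ∈ range (2 * s + 1), f k = f s + ∑ v ∈ Icc 1 s, (f (s - v) + f (s + v)) := by
  have hIcc : ∑ v ∈ Icc 1 s, (f (s - v) + f (s + v))
      = ∑ k ∈ range s, (f (s - 1 - k) + f (s + (k + 1))) := by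
    rw [← Ico_add_one_right_eq_Icc, sum_Ico_eq_sum_range]
    refine sum_congr (by simp) fun k _ => ?_
    rw [add_comm 1 k, Nat.sub_add_eq, Nat.sub_right_comm]
  rw [hIcc, sum_add_distrib, sum_range_reflect, two_mul, add_assoc, sum_range_add,
    sum_range_succ']
  simp only [add_zero]
  abel

theorem neg_one_pow_sub_eq_neg_one_pow_add {M : Type*} [Monoid M] [HasDistribNeg M] {s v : ℕ}
    (hv : v ≤ s) : (-1 : M) ^ (s - v) = (-1) ^ (s + v) := by
  rw [show s + v = s - v + 2 * v by omega, pow_add, pow_mul, neg_one_sq, one_pow, mul_one]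

section CommRing

variable {R : Type*} [CommRing R]

theorem sum_range_neg_one_pow_mul_choose_mul_add_pow_eq_zero {n j : ℕ} (hj : j < n) (y : R) :
    ∑ k ∈ range (n + 1), (-1) ^ (n - k) * (n.choose k : R) * (y + k) ^ j = 0 := by
  have h := congr_fun (fwdDiff_iter_pow_eq_zero_of_lt (R := R) hj) y
  rw [fwdDiff_iter_eq_sum_shift] at h
  simpa [zsmul_eq_mul] using h

theorem choose_mul_zero_pow_add_two_mul_sum_Icc_eq_zero {s j : ℕ} (hj : j < s) :
    ((2 * s).choose s : R) * 0 ^ (2 * j)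
      + 2 * ∑ v ∈ Icc 1 s, (-1) ^ v * ((2 * s).choose (s + v) : R) * (v : R) ^ (2 * j) = 0 := by
  set f : ℕ → R := fun k => (-1) ^ (2 * s - k) * ((2 * s).choose k : R) * (-(s : R) + k) ^ (2 * j)
  have hf : ∑ k ∈ range (2 * s + 1), f k = 0 :=
    sum_range_neg_one_pow_mul_choose_mul_add_pow_eq_zero (by omega) _
  have hcenter : f s = (-1) ^ s * (((2 * s).choose s : R) * 0 ^ (2 * j)) := by
    simp only [f, neg_add_cancel, show 2 * s - s = s by omega]
    ring
  have hpair : ∀ v ∈ Icc 1 s, f (s - v) + f (s + v)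
      = (-1) ^ s * (2 * ((-1) ^ v * ((2 * s).choose (s + v) : R) * (v : R) ^ (2 * j))) := by
    intro v hv
    have hvs : v ≤ s := (mem_Icc.mp hv).2
    have hchoose : (2 * s).choose (s - v) = (2 * s).choose (s + v) :=
      Nat.choose_symm_of_eq_add (by omega)
    simp only [f, Nat.cast_sub hvs, Nat.cast_add, show 2 * s - (s - v) = s + v by omega,
      show 2 * s - (s + v) = s - v by omega, hchoose, neg_one_pow_sub_eq_neg_one_pow_add hvs,
      show -(s : R) + (s - v) = -v by ring, show -(s : R) + (s + v) = v by ring,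
      (even_two_mul j).neg_pow, pow_add]
    ring
  rw [sum_range_two_mul_add_one_eq_add_sum_Icc, hcenter, sum_congr rfl hpair, ← mul_sum,
    ← mul_sum, ← mul_add] at hf
  simpa using hf

end CommRing

noncomputable def centeredDiffCoeff (s v : ℕ) : ℝ :=
  (-1) ^ (v + 1) * (s.factorial : ℝ) ^ 2 /
    ((v : ℝ) * ((s + v).factorial : ℝ) * ((s - v).factorial : ℝ))

theorem centeredDiffCoeff_mul_self {s v : ℕ} (hv : v ∈ Icc 1 s) :
    centeredDiffCoeff s v * v = (-1) ^ (v + 1) * (2 * s).choose (s + v) / (2 * s).choose s := by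
  obtain ⟨hv1, hvs⟩ := mem_Icc.mp hv
  have hfactorial : ((2 * s).choose (s + v) : ℝ) * (s + v).factorial * (s - v).factorial
      = (2 * s).choose s * s.factorial * s.factorial := by
    have h₁ := Nat.choose_mul_factorial_mul_factorial (show s + v ≤ 2 * s by omega)
    have h₂ := Nat.choose_mul_factorial_mul_factorial (show s ≤ 2 * s by omega)
    rw [show 2 * s - (s + v) = s - v by omega] at h₁
    rw [show 2 * s - s = s by omega] at h₂
    exact_mod_cast h₁.trans h₂.symm
  have hchoose : ((2 * s).choose s : ℝ) ≠ 0 := Nat.cast_ne_zero.mpr (Nat.choose_pos (by omega)).ne'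
  rw [centeredDiffCoeff, div_mul_eq_mul_div, div_eq_div_iff (by positivity) hchoose]
  linear_combination (-1) ^ v * (v : ℝ) * hfactorial

theorem sum_centeredDiffCoeff_mul_pow {s j : ℕ} (hj : j < s) :
    ∑ v ∈ Icc 1 s, centeredDiffCoeff s v * (v : ℝ) ^ (2 * j + 1) = 0 ^ (2 * j) / 2 := by
  have hsum := choose_mul_zero_pow_add_two_mul_sum_Icc_eq_zero (R := ℝ) hj
  have hchoose : ((2 * s).choose s : ℝ) ≠ 0 := Nat.cast_ne_zero.mpr (Nat.choose_pos (by omega)).ne'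
  calc ∑ v ∈ Icc 1 s, centeredDiffCoeff s v * (v : ℝ) ^ (2 * j + 1)
      = -(∑ v ∈ Icc 1 s, (-1) ^ v * ((2 * s).choose (s + v) : ℝ) * (v : ℝ) ^ (2 * j))
          / (2 * s).choose s := by
        rw [← sum_neg_distrib, sum_div]
        refine sum_congr rfl fun v hv => ?_
        rw [pow_succ', ← mul_assoc, centeredDiffCoeff_mul_self hv]
        ring
    _ = 0 ^ (2 * j) / 2 := by
        field_simp
        linear_combination -hsum

/-- For `s ≥ 1` and the centered-difference coefficients
`α v = (-1)^(v+1) (s!)² / (v (s+v)! (s-v)!)`, we have `∑_{v=1}^s α v · v = 1/2`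
and `∑_{v=1}^s α v · v^(2j+1) = 0` for `1 ≤ j ≤ s-1`. -/
theorem sbp_alpha_identities (s : ℕ) (hs : 1 ≤ s) (α : ℕ → ℝ)
    (hα : ∀ v : ℕ, α v = (-1 : ℝ) ^ (v + 1) * (Nat.factorial s : ℝ) ^ 2 /
      ((v : ℝ) * (Nat.factorial (s + v) : ℝ) * (Nat.factorial (s - v) : ℝ))) :
    (∑ v ∈ Finset.Icc 1 s, α v * (v : ℝ) = 1 / 2) ∧
    (∀ j : ℕ, 1 ≤ j → j ≤ s - 1 →
      ∑ v ∈ Finset.Icc 1 s, α v * (v : ℝ) ^ (2 * j + 1) = 0) := by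
  obtain rfl : α = centeredDiffCoeff s := funext hα
  refine ⟨?_, fun j hj hjs => ?_⟩
  · simpa using sum_centeredDiffCoeff_mul_pow (s := s) (j := 0) (by omega)
  · simpa [Nat.one_le_iff_ne_zero.mp hj] using
      sum_centeredDiffCoeff_mul_pow (s := s) (j := j) (by omega)
end

section
/- (Necessity direction of Theorem 1.) Let r ≥ 1, m ≥ 0 and q be integers with 2 ≤ q ≤ 2m+2 and q−1 ≤ r, and let σ_0,…,σ_{r−1} be real numbers. Suppose that for every function U : [0,1] → ℝ of class C^{2m+2} there exists a constant C such that |I_n(U) − ∫_0^1 U(x) dx| ≤ C n^{−q} for every integer n ≥ 2r. Then j Σ_{v=0}^{r−1} σ_v (r−v)^{j−1} = r^j − (−1)^j β_j for every j = 1,…,q−1. -/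
/-!
Apply the accuracy hypothesis to `U x = x ^ j` with `j < q`. By Faulhaber's formula, in the form
`∑_{v<N} v^j = (B_{j+1}(N) - B_{j+1}(0)) / (j + 1)` with Bernoulli polynomials `B_k`, the scaled
error `n^{j+1} (I_n(x^j) - ∫_0^1 x^j)` is, for `n ≥ 2r`, the value at `n` of a polynomial, and the
hypothesis bounds it by a constant. A polynomial bounded along the integers is constant, so its
derivative at `n = r` vanishes. Since `B_{j+1}' = (j+1) B_j` and `B_j(1) = (-1)^j β_j`, that
derivative is `j ∑ σ_v (r-v)^{j-1} + (-1)^j β_j - r^j`.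
-/

open Finset Filter

namespace Polynomial

theorem derivative_eq_zero_of_eventually_abs_eval_natCast_le {P : ℝ[X]} {C : ℝ}
    (h : ∀ᶠ n : ℕ in atTop, |P.eval (n : ℝ)| ≤ C) : derivative P = 0 := by
  by_cases hdeg : P.degree ≤ 0
  · rw [eq_C_of_degree_le_zero hdeg, derivative_C]
  obtain ⟨n, hle, hgt⟩ := (h.and (((abs_tendsto_atTop P (not_le.mp hdeg)).comp
    tendsto_natCast_atTop_atTop).eventually_gt_atTop C)).exists
  exact absurd hle (not_le.mpr hgt)

theorem sum_Ico_pow_mul_eq_bernoulli_map_sub {K : Type*} [Field K] [CharZero K] (p : ℕ)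
    {a b : ℕ} (hab : a ≤ b) :
    (∑ k ∈ Ico a b, (k : K) ^ p) * (p + 1) =
      ((bernoulli (p + 1)).map (algebraMap ℚ K)).eval (b : K) -
        ((bernoulli (p + 1)).map (algebraMap ℚ K)).eval (a : K) := by
  have hrange (n : ℕ) : (∑ k ∈ range n, (k : K) ^ p) * (p + 1) =
      ((bernoulli (p + 1)).map (algebraMap ℚ K)).eval (n : K) - _root_.bernoulli (p + 1) := by
    rw [eval_natCast_map, eq_ratCast, mul_comm]
    exact_mod_cast sum_range_pow_eq_bernoulli_sub n p
  rw [sum_Ico_eq_sub _ hab, sub_mul, hrange, hrange, sub_sub_sub_cancel_right]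

end Polynomial

theorem abs_mul_pow_le_of_abs_le_div_pow {x C a : ℝ} {k q : ℕ} (ha : 1 ≤ a) (hkq : k ≤ q)
    (hx : |x| ≤ C / a ^ q) : |x * a ^ k| ≤ C := by
  have ha0 : 0 < a := one_pos.trans_le ha
  have hCa : 0 ≤ C / a ^ q := (abs_nonneg x).trans hx
  calc |x * a ^ k| = |x| * a ^ k := by rw [abs_mul, abs_of_pos (pow_pos ha0 k)]
    _ ≤ C / a ^ q * a ^ q := mul_le_mul hx (pow_le_pow_right₀ ha hkq) (by positivity) hCa
    _ = C := div_mul_cancel₀ C (by positivity)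

section CorrectedTrapezoid

open Polynomial

variable (r : ℕ) (σ : ℕ → ℝ) (p : ℕ)

noncomputable def correctedTrapezoid (n : ℕ) (U : ℝ → ℝ) : ℝ :=
  (1 / (n : ℝ)) *
    ((∑ v ∈ range r, σ v * U ((v : ℝ) / (n : ℝ))) +
     (∑ v ∈ Icc r (n - r), U ((v : ℝ) / (n : ℝ))) +
     ∑ v ∈ range r, σ v * U (((n - v : ℕ) : ℝ) / (n : ℝ)))

theorem correctedTrapezoid_pow_mul {n : ℕ} (hrn : r ≤ n) (hn : n ≠ 0) :
    correctedTrapezoid r σ n (· ^ p) * (n : ℝ) ^ (p + 1) =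
      ∑ v ∈ range r, σ v * ((v : ℝ) ^ p + ((n : ℝ) - v) ^ p) +
        ∑ v ∈ Icc r (n - r), (v : ℝ) ^ p := by
  have hright : ∑ v ∈ range r, σ v * ((n - v : ℕ) : ℝ) ^ p =
      ∑ v ∈ range r, σ v * ((n : ℝ) - v) ^ p :=
    sum_congr rfl fun v hv => by rw [Nat.cast_sub (hrn.trans' (mem_range.mp hv).le)]
  simp only [correctedTrapezoid, div_pow, mul_div_assoc', ← sum_div, hright]
  field_simp
  simp only [mul_add, sum_add_distrib]
  ring

-- The interior sum `∑_{v=r}^{n-r} v^p` becomes `(B_{p+1}(n - r + 1) - B_{p+1}(r)) / (p + 1)`.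
noncomputable def trapezoidErrorPoly : ℝ[X] :=
  ∑ v ∈ range r, C (σ v) * (C ((v : ℝ) ^ p) + (X - C (v : ℝ)) ^ p) +
    C ((p + 1 : ℝ)⁻¹) *
      (((Polynomial.bernoulli (p + 1)).map (algebraMap ℚ ℝ)).comp (X + C (1 - r : ℝ)) -
        C (((Polynomial.bernoulli (p + 1)).map (algebraMap ℚ ℝ)).eval (r : ℝ)) - X ^ (p + 1))

theorem eval_trapezoidErrorPoly {n : ℕ} (hrn : 2 * r ≤ n) (hn : n ≠ 0) :
    (trapezoidErrorPoly r σ p).eval (n : ℝ) =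
      (correctedTrapezoid r σ n (· ^ p) - ∫ x in (0 : ℝ)..1, x ^ p) * (n : ℝ) ^ (p + 1) := by
  have hmid := sum_Ico_pow_mul_eq_bernoulli_map_sub (K := ℝ) p (show r ≤ n - r + 1 by omega)
  rw [Ico_add_one_right_eq_Icc, Nat.cast_add_one, Nat.cast_sub (by omega)] at hmid
  rw [integral_pow, sub_mul, correctedTrapezoid_pow_mul r σ p (by omega) hn]
  simp only [trapezoidErrorPoly, eval_add, eval_sub, eval_mul, eval_C, eval_pow, eval_X,
    eval_comp, eval_finsetSum]
  rw [show (n : ℝ) + (1 - r) = n - r + 1 by ring, ← hmid]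
  simp only [one_pow, zero_pow (Nat.succ_ne_zero p)]
  field_simp
  ring

theorem eval_derivative_trapezoidErrorPoly :
    (derivative (trapezoidErrorPoly r σ p)).eval (r : ℝ) =
      p * ∑ v ∈ range r, σ v * ((r : ℝ) - v) ^ (p - 1) + bernoulli' p - (r : ℝ) ^ p := by
  simp only [trapezoidErrorPoly, derivative_add, derivative_mul, derivative_sub, derivative_C,
    derivative_sum, derivative_comp, derivative_X_sub_C_pow, derivative_X_pow, derivative_X,
    derivative_map, derivative_bernoulli_add_one, Polynomial.map_mul]
  simp only [eval_add, eval_sub, eval_mul, eval_C, eval_pow, eval_X, eval_comp, eval_finsetSum,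
    eval_zero, eval_one, add_sub_cancel, eval_one_map, bernoulli_eval_one]
  simp only [zero_mul, zero_add, sub_zero, eval_natCast, Nat.add_sub_cancel, Nat.cast_add,
    Nat.cast_one, map_add, map_natCast, map_one, eq_ratCast, mul_left_comm (σ _) (p : ℝ),
    ← mul_sum]
  field_simp
  ring

end CorrectedTrapezoid

theorem trapezoid_end_corrections_necessary_general (r m q : ℕ) (σ : ℕ → ℝ)
    (hacc : ∀ U : ℝ → ℝ, ContDiffOn ℝ ((2 * m + 2 : ℕ) : ℕ∞) U (Set.Icc (0 : ℝ) 1) →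
      ∃ C : ℝ, ∀ n : ℕ, 2 * r ≤ n →
        |(1 / (n : ℝ)) *
            ((∑ v ∈ Finset.range r, σ v * U ((v : ℝ) / (n : ℝ))) +
             (∑ v ∈ Finset.Icc r (n - r), U ((v : ℝ) / (n : ℝ))) +
             ∑ v ∈ Finset.range r, σ v * U (((n - v : ℕ) : ℝ) / (n : ℝ))) -
          ∫ x in (0 : ℝ)..1, U x| ≤ C / (n : ℝ) ^ q) :
    ∀ j : ℕ, 1 ≤ j → j ≤ q - 1 →
      (j : ℝ) * ∑ v ∈ Finset.range r, σ v * ((r - v : ℕ) : ℝ) ^ (j - 1) =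
        (r : ℝ) ^ j - (-1 : ℝ) ^ j * (bernoulli j : ℝ) := by
  intro j hj hjq
  obtain ⟨C, hC⟩ := hacc (· ^ j) (by fun_prop)
  have hbounded : ∀ᶠ n : ℕ in atTop, |(trapezoidErrorPoly r σ j).eval (n : ℝ)| ≤ C := by
    filter_upwards [eventually_ge_atTop (2 * r + 1)] with n hn
    rw [eval_trapezoidErrorPoly r σ j (by omega) (by omega)]
    exact abs_mul_pow_le_of_abs_le_div_pow (by exact_mod_cast (by omega : 1 ≤ n)) (by omega)
      (hC n (by omega))
  have hderiv := congrArg (Polynomial.eval (r : ℝ))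
    (Polynomial.derivative_eq_zero_of_eventually_abs_eval_natCast_le hbounded)
  rw [eval_derivative_trapezoidErrorPoly, Polynomial.eval_zero] at hderiv
  have hcast : ∑ v ∈ range r, σ v * ((r - v : ℕ) : ℝ) ^ (j - 1) =
      ∑ v ∈ range r, σ v * ((r : ℝ) - v) ^ (j - 1) :=
    sum_congr rfl fun v hv => by rw [Nat.cast_sub (mem_range.mp hv).le]
  have hsign : (-1 : ℝ) ^ j * (bernoulli j : ℝ) = bernoulli' j := by
    exact_mod_cast (bernoulli'_eq_bernoulli j).symm
  rw [hcast, hsign]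
  linear_combination hderiv

/-- necessity direction of Theorem 1: if the trapezoid rule with
end corrections `I_n(U)` is a `q`-order accurate approximation of `∫_0^1 U`
for every `U` of class `C^{2m+2}`, then the boundary weights satisfy
`j ∑_{v=0}^{r-1} σ_v (r-v)^{j-1} = r^j − (−1)^j β_j` for `j = 1, …, q−1`. -/
theorem trapezoid_end_corrections_necessary (r m q : ℕ) (hr : 1 ≤ r)
    (hq2 : 2 ≤ q) (hqm : q ≤ 2 * m + 2) (hqr : q - 1 ≤ r) (σ : ℕ → ℝ)
    (hacc : ∀ U : ℝ → ℝ, ContDiffOn ℝ ((2 * m + 2 : ℕ) : ℕ∞) U (Set.Icc (0 : ℝ) 1) →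
      ∃ C : ℝ, ∀ n : ℕ, 2 * r ≤ n →
        |(1 / (n : ℝ)) *
            ((∑ v ∈ Finset.range r, σ v * U ((v : ℝ) / (n : ℝ))) +
             (∑ v ∈ Finset.Icc r (n - r), U ((v : ℝ) / (n : ℝ))) +
             ∑ v ∈ Finset.range r, σ v * U (((n - v : ℕ) : ℝ) / (n : ℝ))) -
          ∫ x in (0 : ℝ)..1, U x| ≤ C / (n : ℝ) ^ q) :
    ∀ j : ℕ, 1 ≤ j → j ≤ q - 1 →
      (j : ℝ) * ∑ v ∈ Finset.range r, σ v * ((r - v : ℕ) : ℝ) ^ (j - 1) =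
        (r : ℝ) ^ j - (-1 : ℝ) ^ j * (bernoulli j : ℝ) :=
  trapezoid_end_corrections_necessary_general r m q σ hacc
end

section
/- (Exactness core of Theorem 2.) Let n ≥ 1 and s ≥ 1 be integers and for each integer j ≥ 0 let w_j ∈ ℝ^{n+1} be the vector with entries (w_j)_v = (v/n)^j, v = 0,…,n. Let H and Q be real (n+1)×(n+1) matrices such that: (i) H is symmetric and w_i^T H w_k = 1/(i+k+1) for all integers i, k ≥ 0 with i+k ≤ 2s−1; (ii) Q + Q^T = B, where B is the diagonal matrix diag(−1, 0, …, 0, 1); (iii) Q w_0 = 0 and Q w_j = j H w_{j−1} for every j = 1,…,s (i.e., the operator H^{−1}Q differentiates polynomials of degree at most s exactly at all nodes). Then w_i^T Q w_j = j/(i+j) for all integers i, j ≥ 0 with 1 ≤ i+j ≤ 2s, i.e., the bilinear form z^T Q u is exact for the integral ∫_0^1 x^i · (d/dx) x^j dx on all monomial pairs of total degree at most 2s. -/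
/-!
For `j ≤ s` the exactness of `D = H⁻¹Q` on `x^j` turns `w_iᵀ Q w_j` into `j · w_iᵀ H w_{j-1}`,
which the quadrature rule evaluates to `j/(i+j)`. For `j > s` the total degree bound forces
`i ≤ s`, and the SBP property `Q + Qᵀ = B` reflects the pair:
`w_iᵀ Q w_j = w_iᵀ B w_j − w_jᵀ Q w_i = 1 − i/(i+j)`, the discrete integration by parts
`∫₀¹ x^i (x^j)' = 1 − ∫₀¹ x^j (x^i)'`.
-/

open Matrix

section Bilinear

variable {ι R : Type*} [Fintype ι] [CommRing R]

theorem dotProduct_mulVec_add_dotProduct_mulVec_swap {Q B : Matrix ι ι R} (hQ : Q + Qᵀ = B)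
    (x y : ι → R) : x ⬝ᵥ Q *ᵥ y + y ⬝ᵥ Q *ᵥ x = x ⬝ᵥ B *ᵥ y := by
  rw [← hQ, add_mulVec, dotProduct_add, dotProduct_transpose_mulVec]

theorem dotProduct_boundary_mulVec {n : ℕ} (hn : n ≠ 0) (x y : Fin (n + 1) → R) :
    x ⬝ᵥ diagonal (fun v : Fin (n + 1) =>
        if v = 0 then (-1 : R) else if v = Fin.last n then 1 else 0) *ᵥ y
      = x (Fin.last n) * y (Fin.last n) - x 0 * y 0 := by
  have hlast : Fin.last n ≠ 0 := by simpa [Fin.ext_iff] using hn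
  simp only [dotProduct, mulVec_diagonal]
  rw [Fintype.sum_eq_add (Fin.last n) 0 hlast]
  · simp [hlast]
    ring
  · rintro v ⟨hvl, hv0⟩
    simp [hvl, hv0]

end Bilinear

section Exactness

variable {ι : Type*} [Fintype ι] {s : ℕ} {H Q : Matrix ι ι ℝ} {w : ℕ → ι → ℝ}

theorem dotProduct_mulVec_monomial_of_le
    (hHquad : ∀ i k : ℕ, i + k ≤ 2 * s - 1 → w i ⬝ᵥ H *ᵥ w k = 1 / ((i : ℝ) + k + 1))
    (hQ0 : Q *ᵥ w 0 = 0) (hQw : ∀ j : ℕ, 1 ≤ j → j ≤ s → Q *ᵥ w j = (j : ℝ) • H *ᵥ w (j - 1))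
    {i j : ℕ} (hjs : j ≤ s) (hij : i + j ≤ 2 * s) :
    w i ⬝ᵥ Q *ᵥ w j = j / (i + j) := by
  rcases Nat.eq_zero_or_pos j with rfl | hj
  · simp [hQ0]
  · rw [hQw j hj hjs, dotProduct_smul, hHquad i (j - 1) (by omega), smul_eq_mul,
      Nat.cast_sub hj, Nat.cast_one, mul_one_div]
    ring_nf

end Exactness

theorem sbp_bilinear_form_exact_on_monomials_general (n s : ℕ) (hn : 1 ≤ n)
    (H Q : Matrix (Fin (n + 1)) (Fin (n + 1)) ℝ)
    (w : ℕ → Fin (n + 1) → ℝ)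
    (hw : ∀ (j : ℕ) (v : Fin (n + 1)), w j v = (((v : ℕ) : ℝ) / (n : ℝ)) ^ j)
    (hHquad : ∀ i k : ℕ, i + k ≤ 2 * s - 1 →
      w i ⬝ᵥ H.mulVec (w k) = 1 / ((i : ℝ) + (k : ℝ) + 1))
    (hQ : Q + Qᵀ = Matrix.diagonal (fun v : Fin (n + 1) =>
      if v = 0 then (-1 : ℝ) else if v = Fin.last n then 1 else 0))
    (hQ0 : Q.mulVec (w 0) = 0)
    (hQw : ∀ j : ℕ, 1 ≤ j → j ≤ s →
      Q.mulVec (w j) = (j : ℝ) • H.mulVec (w (j - 1))) :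
    ∀ i j : ℕ, 1 ≤ i + j → i + j ≤ 2 * s →
      w i ⬝ᵥ Q.mulVec (w j) = (j : ℝ) / ((i : ℝ) + (j : ℝ)) := by
  have hn0 : n ≠ 0 := by omega
  have hw_last (j : ℕ) : w j (Fin.last n) = 1 := by
    rw [hw, Fin.val_last, div_self (Nat.cast_ne_zero.mpr hn0), one_pow]
  have hw_zero (j : ℕ) (hj : j ≠ 0) : w j 0 = 0 := by simp [hw, hj]
  have hreflect (i j : ℕ) (hj : j ≠ 0) : w i ⬝ᵥ Q *ᵥ w j = 1 - w j ⬝ᵥ Q *ᵥ w i := by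
    rw [eq_sub_iff_add_eq, dotProduct_mulVec_add_dotProduct_mulVec_swap hQ,
      dotProduct_boundary_mulVec hn0, hw_last, hw_last, hw_zero j hj, mul_zero, sub_zero, one_mul]
  intro i j _ hdeg
  rcases le_or_gt j s with hjs | hsj
  · exact dotProduct_mulVec_monomial_of_le hHquad hQ0 hQw hjs hdeg
  · have hpos : (i : ℝ) + j ≠ 0 :=
      (add_pos_of_nonneg_of_pos (Nat.cast_nonneg i) (Nat.cast_pos.mpr (by omega))).ne'
    rw [hreflect i j (by omega),
      dotProduct_mulVec_monomial_of_le hHquad hQ0 hQw (by omega) (by omega), add_comm (j : ℝ)]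
    field_simp
    ring

/-- exactness core of Theorem 2: let `w_j` be the monomial grid
vectors `(w_j)_v = (v/n)^j`. If (i) the `H` inner product integrates monomial
pairs of total degree at most `2s−1` exactly, (ii) `Q + Qᵀ = diag(−1,0,…,0,1)`,
and (iii) `Q w_0 = 0` and `Q w_j = j H w_{j−1}` for `j = 1, …, s`, then
`w_iᵀ Q w_j = j/(i+j)` whenever `1 ≤ i+j ≤ 2s`. -/
theorem sbp_bilinear_form_exact_on_monomials (n s : ℕ) (hn : 1 ≤ n) (hs : 1 ≤ s)
    (H Q : Matrix (Fin (n + 1)) (Fin (n + 1)) ℝ)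
    (w : ℕ → Fin (n + 1) → ℝ)
    (hw : ∀ (j : ℕ) (v : Fin (n + 1)), w j v = (((v : ℕ) : ℝ) / (n : ℝ)) ^ j)
    (hHsym : H.IsSymm)
    (hHquad : ∀ i k : ℕ, i + k ≤ 2 * s - 1 →
      w i ⬝ᵥ H.mulVec (w k) = 1 / ((i : ℝ) + (k : ℝ) + 1))
    (hQ : Q + Qᵀ = Matrix.diagonal (fun v : Fin (n + 1) =>
      if v = 0 then (-1 : ℝ) else if v = Fin.last n then 1 else 0))
    (hQ0 : Q.mulVec (w 0) = 0)
    (hQw : ∀ j : ℕ, 1 ≤ j → j ≤ s →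
      Q.mulVec (w j) = (j : ℝ) • H.mulVec (w (j - 1))) :
    ∀ i j : ℕ, 1 ≤ i + j → i + j ≤ 2 * s →
      w i ⬝ᵥ Q.mulVec (w j) = (j : ℝ) / ((i : ℝ) + (j : ℝ)) :=
  sbp_bilinear_form_exact_on_monomials_general n s hn H Q w hw hHquad hQ hQ0 hQw
end

section
/- (Discrete divergence theorem, general form.) Let n ≥ 1, let H and Q be real (n+1)×(n+1) matrices with H invertible, Q + Q^T = B where B = diag(−1, 0, …, 0, 1), and Q c = 0 where c ∈ ℝ^{n+1} is the all-ones vector. Set D = H^{−1} Q and let I be the (n+1)×(n+1) identity. Then for all vectors f, g ∈ ℝ^{(n+1)^2}, (c ⊗ c)^T (H ⊗ H) [ (I ⊗ D) f + (D ⊗ I) g ] = (c ⊗ c)^T (H ⊗ B) f + (c ⊗ c)^T (B ⊗ H) g. In particular, the H⊗H-weighted sum of the discrete divergence depends only on the entries of f and g associated with boundary nodes. -/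
open Matrix Kronecker

lemma kron_vecMul_split {m : Type*} [Fintype m] [DecidableEq m]
    (u v : m → ℝ) (A M : Matrix m m ℝ) :
    (fun p : m × m => u p.1 * v p.2) ᵥ* (A ⊗ₖ M) =
      fun p : m × m => (u ᵥ* A) p.1 * (v ᵥ* M) p.2 := by
  funext p
  simp only [Matrix.vecMul, dotProduct, Matrix.kroneckerMap_apply,
    Fintype.sum_prod_type, Finset.sum_mul, Finset.mul_sum]
  rw [Finset.sum_comm]
  apply Finset.sum_congr rfl
  intro a _
  apply Finset.sum_congr rfl
  intro b _
  ring

/-- discrete divergence theorem, general form: with `D = H⁻¹Q`,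
`Q + Qᵀ = B = diag(−1,0,…,0,1)` and `Q c = 0` for the all-ones vector `c`,
the `H ⊗ H`-weighted sum of the discrete divergence reduces to boundary terms:
`(c ⊗ c)ᵀ (H ⊗ H) [(I ⊗ D) f + (D ⊗ I) g] = (c ⊗ c)ᵀ (H ⊗ B) f + (c ⊗ c)ᵀ (B ⊗ H) g`. -/
theorem sbp_discrete_divergence_theorem (n : ℕ) (hn : 1 ≤ n)
    (H Q : Matrix (Fin (n + 1)) (Fin (n + 1)) ℝ)
    (hH : IsUnit H.det)
    (B : Matrix (Fin (n + 1)) (Fin (n + 1)) ℝ)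
    (hB : B = Matrix.diagonal (fun v : Fin (n + 1) =>
      if v = 0 then (-1 : ℝ) else if v = Fin.last n then 1 else 0))
    (hQ : Q + Qᵀ = B)
    (c : Fin (n + 1) → ℝ) (hc : c = fun _ => 1)
    (hQc : Q.mulVec c = 0)
    (D : Matrix (Fin (n + 1)) (Fin (n + 1)) ℝ) (hD : D = H⁻¹ * Q) :
    ∀ f g : Fin (n + 1) × Fin (n + 1) → ℝ,
      (fun p : Fin (n + 1) × Fin (n + 1) => c p.1 * c p.2) ⬝ᵥ
          (H ⊗ₖ H).mulVec (((1 : Matrix (Fin (n + 1)) (Fin (n + 1)) ℝ) ⊗ₖ D).mulVec f +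
            (D ⊗ₖ (1 : Matrix (Fin (n + 1)) (Fin (n + 1)) ℝ)).mulVec g) =
        (fun p : Fin (n + 1) × Fin (n + 1) => c p.1 * c p.2) ⬝ᵥ (H ⊗ₖ B).mulVec f +
        (fun p : Fin (n + 1) × Fin (n + 1) => c p.1 * c p.2) ⬝ᵥ (B ⊗ₖ H).mulVec g := by
  intro f g
  have hHD : H * D = Q := by
    rw [hD, ← Matrix.mul_assoc, Matrix.mul_nonsing_inv H hH, Matrix.one_mul]
  have hBsymm : Bᵀ = B := by rw [hB, Matrix.diagonal_transpose]
  have hcQ : c ᵥ* Q = c ᵥ* B := by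
    have h1 : Qᵀ = B - Q := by rw [← hQ]; abel
    rw [← Matrix.mulVec_transpose Q c, ← Matrix.mulVec_transpose B c, h1,
      Matrix.sub_mulVec, hQc, hBsymm, sub_zero]
  rw [Matrix.mulVec_add, dotProduct_add,
    Matrix.mulVec_mulVec, Matrix.mulVec_mulVec,
    ← Matrix.mul_kronecker_mul, ← Matrix.mul_kronecker_mul,
    hHD,
    Matrix.dotProduct_mulVec, Matrix.dotProduct_mulVec,
    Matrix.dotProduct_mulVec, Matrix.dotProduct_mulVec,
    kron_vecMul_split, kron_vecMul_split, kron_vecMul_split, kron_vecMul_split, hcQ, Matrix.mul_one]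
end

section
/- (Discrete divergence theorem, diagonal-norm form.) Let n ≥ 1, let H = diag(h_0,…,h_n) be an invertible real diagonal (n+1)×(n+1) matrix, and let Q be a real (n+1)×(n+1) matrix with Q + Q^T = B where B = diag(−1, 0, …, 0, 1) and Q c = 0 where c is the all-ones vector. Set D = H^{−1}Q. Index vectors f, g ∈ ℝ^{(n+1)^2} by pairs (j,k) with component f_{j,k} at position k(n+1)+j. Then c_2^T (H ⊗ H) [ (I ⊗ D) f + (D ⊗ I) g ] = Σ_{k=0}^{n} h_k ( f_{n,k} − f_{0,k} ) + Σ_{j=0}^{n} h_j ( g_{j,n} − g_{j,0} ), where c_2 = c ⊗ c and I is the (n+1)×(n+1) identity. -/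
open Matrix Kronecker

/-- discrete divergence theorem, diagonal-norm form: for a
diagonal norm `H = diag(h_0,…,h_n)` and `D = H⁻¹Q` with `Q + Qᵀ = B` and
`Q c = 0`, the `H ⊗ H`-weighted sum of the discrete divergence equals
`∑_k h_k (f_{n,k} − f_{0,k}) + ∑_j h_j (g_{j,n} − g_{j,0})`.
Vectors are indexed by pairs `(k, j)` (component `f_{j,k}` at position
`k(n+1)+j`, i.e. `f (k, j)` is the value `f_{j,k}`). -/
theorem sbp_discrete_divergence_theorem_diagonal (n : ℕ) (hn : 1 ≤ n)
    (h : Fin (n + 1) → ℝ) (hinv : ∀ v, h v ≠ 0)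
    (H : Matrix (Fin (n + 1)) (Fin (n + 1)) ℝ) (hH : H = Matrix.diagonal h)
    (Q : Matrix (Fin (n + 1)) (Fin (n + 1)) ℝ)
    (B : Matrix (Fin (n + 1)) (Fin (n + 1)) ℝ)
    (hB : B = Matrix.diagonal (fun v : Fin (n + 1) =>
      if v = 0 then (-1 : ℝ) else if v = Fin.last n then 1 else 0))
    (hQ : Q + Qᵀ = B)
    (c : Fin (n + 1) → ℝ) (hc : c = fun _ => 1)
    (hQc : Q.mulVec c = 0)
    (D : Matrix (Fin (n + 1)) (Fin (n + 1)) ℝ) (hD : D = H⁻¹ * Q) :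
    ∀ f g : Fin (n + 1) × Fin (n + 1) → ℝ,
      (fun p : Fin (n + 1) × Fin (n + 1) => c p.1 * c p.2) ⬝ᵥ
          (H ⊗ₖ H).mulVec (((1 : Matrix (Fin (n + 1)) (Fin (n + 1)) ℝ) ⊗ₖ D).mulVec f +
            (D ⊗ₖ (1 : Matrix (Fin (n + 1)) (Fin (n + 1)) ℝ)).mulVec g) =
        (∑ k : Fin (n + 1), h k * (f (k, Fin.last n) - f (k, 0))) +
        ∑ j : Fin (n + 1), h j * (g (Fin.last n, j) - g (0, j)) := by
  intro f g
  subst hH hB hc hD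
  have hne : n ≠ 0 := by omega
  have h0last : (0 : Fin (n+1)) ≠ Fin.last n := by
    intro e
    have := congrArg Fin.val e
    simp [Fin.last] at this
    omega
  -- H * D = Q
  have hdet : IsUnit (Matrix.diagonal h).det := by
    rw [Matrix.det_diagonal]
    exact (Finset.prod_ne_zero_iff.mpr fun i _ => hinv i).isUnit
  have hHD : Matrix.diagonal h * ((Matrix.diagonal h)⁻¹ * Q) = Q := by
    rw [← Matrix.mul_assoc, Matrix.mul_nonsing_inv _ hdet, Matrix.one_mul]
  -- column sums of Q
  have hcol : ∀ j' : Fin (n+1), (∑ j, Q j j') =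
      (if j' = 0 then (-1:ℝ) else if j' = Fin.last n then 1 else 0) := by
    intro j'
    have hQT : Qᵀ = Matrix.diagonal (fun v : Fin (n + 1) =>
        if v = 0 then (-1 : ℝ) else if v = Fin.last n then 1 else 0) - Q := by
      rw [← hQ, add_sub_cancel_left]
    have := congrFun (congrArg (fun M => M.mulVec (fun _ => (1:ℝ))) hQT) j'
    simp only [Matrix.sub_mulVec, hQc, Pi.sub_apply, Pi.zero_apply, sub_zero,
      Matrix.mulVec_diagonal, mul_one] at this
    simpa [Matrix.mulVec, dotProduct, Matrix.transpose_apply] using this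
  -- generic sum identity
  have key : ∀ (A C : Matrix (Fin (n+1)) (Fin (n+1)) ℝ) (v : Fin (n+1) × Fin (n+1) → ℝ),
      (fun _ : Fin (n+1) × Fin (n+1) => (1:ℝ)) ⬝ᵥ (A ⊗ₖ C).mulVec v
        = ∑ k' : Fin (n+1), ∑ j' : Fin (n+1),
            (∑ k, A k k') * (∑ j, C j j') * v (k', j') := by
    intro A C v
    simp only [dotProduct, Matrix.mulVec, Matrix.kroneckerMap_apply, one_mul]
    rw [Finset.sum_comm, Fintype.sum_prod_type]
    refine Finset.sum_congr rfl fun k' _ => Finset.sum_congr rfl fun j' _ => ?_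
    rw [Finset.sum_mul_sum, Finset.sum_mul, Fintype.sum_prod_type]
    exact Finset.sum_congr rfl fun k _ => by rw [Finset.sum_mul]
  have hsum : ∀ j' : Fin (n+1), (∑ j, (Matrix.diagonal h) j j') = h j' := by
    intro j'
    simp [Matrix.diagonal_apply, Finset.sum_ite_eq]
  calc (fun p : Fin (n + 1) × Fin (n + 1) => (1:ℝ) * 1) ⬝ᵥ
          (Matrix.diagonal h ⊗ₖ Matrix.diagonal h).mulVec
            (((1 : Matrix (Fin (n + 1)) (Fin (n + 1)) ℝ) ⊗ₖ ((Matrix.diagonal h)⁻¹ * Q)).mulVec f +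
              (((Matrix.diagonal h)⁻¹ * Q) ⊗ₖ (1 : Matrix (Fin (n + 1)) (Fin (n + 1)) ℝ)).mulVec g)
      = (fun _ : Fin (n+1) × Fin (n+1) => (1:ℝ)) ⬝ᵥ
          ((Matrix.diagonal h ⊗ₖ Q).mulVec f)
        + (fun _ : Fin (n+1) × Fin (n+1) => (1:ℝ)) ⬝ᵥ
          ((Q ⊗ₖ Matrix.diagonal h).mulVec g) := by
        rw [Matrix.mulVec_add, dotProduct_add, Matrix.mulVec_mulVec,
          Matrix.mulVec_mulVec, ← Matrix.mul_kronecker_mul, ← Matrix.mul_kronecker_mul,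
          Matrix.mul_one, hHD]
        norm_num
    _ = (∑ k : Fin (n + 1), h k * (f (k, Fin.last n) - f (k, 0))) +
        ∑ j : Fin (n + 1), h j * (g (Fin.last n, j) - g (0, j)) := by
        rw [key, key]
        congr 1
        · refine Finset.sum_congr rfl fun k _ => ?_
          simp only [hsum, hcol]
          simp only [show ∀ j' : Fin (n+1), h k * (if j' = 0 then (-1:ℝ) else if j' = Fin.last n then 1 else 0) * f (k, j')
              = (if j' = Fin.last n then h k * f (k, j') else 0) - (if j' = 0 then h k * f (k, j') else 0) from
            fun j' => by
              rcases eq_or_ne j' 0 with rfl | h0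
              · simp [h0last.symm, hne]
              · rcases eq_or_ne j' (Fin.last n) with rfl | hl
                · simp [h0]
                · simp [h0, hl]]
          rw [Finset.sum_sub_distrib]
          simp [mul_sub]
        · rw [Finset.sum_comm]
          refine Finset.sum_congr rfl fun j _ => ?_
          simp only [hsum, hcol]
          simp only [show ∀ k' : Fin (n+1), (if k' = 0 then (-1:ℝ) else if k' = Fin.last n then 1 else 0) * h j * g (k', j)
              = (if k' = Fin.last n then h j * g (k', j) else 0) - (if k' = 0 then h j * g (k', j) else 0) from
            fun k' => by
              rcases eq_or_ne k' 0 with rfl | h0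
              · simp [h0last.symm, hne]
              · rcases eq_or_ne k' (Fin.last n) with rfl | hl
                · simp [h0]
                · simp [h0, hl]]
          rw [Finset.sum_sub_distrib]
          simp [mul_sub]
end

section
/- Let q ≥ 2 be an integer and set r = q−1. Then there exists exactly one vector (σ_0,…,σ_{r−1}) ∈ ℝ^r satisfying the system j Σ_{v=0}^{r−1} σ_v (r−v)^{j−1} = r^j − (−1)^j β_j for j = 1,…,q−1; that is, when r = q−1 the quadrature accuracy conditions determine the boundary weights of the trapezoid rule with end corrections uniquely. -/
/-- when `r = q−1`, the quadrature accuracy conditions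
`j ∑_{v=0}^{r−1} σ_v (r−v)^{j−1} = r^j − (−1)^j β_j`, `j = 1, …, q−1`,
determine the boundary weights `(σ_0, …, σ_{r−1})` uniquely. -/
theorem end_correction_weights_unique (q : ℕ) (hq : 2 ≤ q) :
    ∃! σ : Fin (q - 1) → ℝ, ∀ j : ℕ, 1 ≤ j → j ≤ q - 1 →
      (j : ℝ) * ∑ v : Fin (q - 1), σ v * (((q - 1) - (v : ℕ) : ℕ) : ℝ) ^ (j - 1) =
        ((q - 1 : ℕ) : ℝ) ^ j - (-1 : ℝ) ^ j * (bernoulli j : ℝ) := by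
  set r := q - 1 with hr
  set x : Fin r → ℝ := fun v => ((r - (v : ℕ) : ℕ) : ℝ) with hx
  set M : Matrix (Fin r) (Fin r) ℝ := Matrix.of fun j v => x v ^ (j : ℕ) with hM
  have hxinj : Function.Injective x := by
    intro a b hab
    have h : (r - (a : ℕ) : ℕ) = (r - (b : ℕ) : ℕ) := Nat.cast_injective hab
    have ha := a.isLt; have hb := b.isLt
    exact Fin.ext (by omega)
  have hdet : M.det ≠ 0 := by
    have hMt : M = (Matrix.vandermonde x).transpose := by
      ext j v
      simp [hM, Matrix.vandermonde_apply, Matrix.transpose_apply]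
    rw [hMt, Matrix.det_transpose, Matrix.det_vandermonde]
    apply Finset.prod_ne_zero_iff.2
    intro i _
    apply Finset.prod_ne_zero_iff.2
    intro j hj
    have hij : i < j := Finset.mem_Ioi.mp hj
    exact sub_ne_zero_of_ne fun h => hij.ne' (hxinj h)
  set b : Fin r → ℝ := fun i =>
    (((r : ℕ) : ℝ) ^ ((i : ℕ) + 1) - (-1 : ℝ) ^ ((i : ℕ) + 1) *
      (bernoulli ((i : ℕ) + 1) : ℝ)) / (((i : ℕ) : ℝ) + 1) with hb
  have key : ∀ σ : Fin r → ℝ,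
      (∀ j : ℕ, 1 ≤ j → j ≤ r →
        (j : ℝ) * ∑ v : Fin r, σ v * ((r - (v : ℕ) : ℕ) : ℝ) ^ (j - 1) =
          ((r : ℕ) : ℝ) ^ j - (-1 : ℝ) ^ j * (bernoulli j : ℝ)) ↔
      M.mulVec σ = b := by
    intro σ
    constructor
    · intro h
      funext i
      have hi := h ((i : ℕ) + 1) (Nat.le_add_left 1 _) (by omega)
      have hne : (((i : ℕ) : ℝ) + 1) ≠ 0 := by positivity
      have : M.mulVec σ i = ∑ v : Fin r, σ v * ((r - (v : ℕ) : ℕ) : ℝ) ^ (i : ℕ) := by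
        simp [Matrix.mulVec, dotProduct, hM, hx, mul_comm]
      rw [this, hb]
      field_simp
      rw [mul_comm]
      simpa using hi
    · intro h j hj1 hj2
      have : j - 1 < r := by omega
      set i : Fin r := ⟨j - 1, this⟩ with hi
      have hij : (i : ℕ) + 1 = j := by simp [hi]; omega
      have hmv := congrFun h i
      have hmv' : ∑ v : Fin r, σ v * ((r - (v : ℕ) : ℕ) : ℝ) ^ (j - 1) = b i := by
        rw [← hmv]
        simp [Matrix.mulVec, dotProduct, hM, hx, mul_comm, hi]
      rw [hmv', hb]
      have hne : (((i : ℕ) : ℝ) + 1) ≠ 0 := by positivity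
      have hcast : ((j : ℕ) : ℝ) = ((i : ℕ) : ℝ) + 1 := by
        rw [← hij]; push_cast; ring
      rw [hcast, mul_div_cancel₀ _ hne, hij]
  have hinv : Invertible M := M.invertibleOfIsUnitDet (isUnit_iff_ne_zero.2 hdet)
  refine ⟨M⁻¹.mulVec b, (key _).mpr ?_, ?_⟩
  · rw [Matrix.mulVec_mulVec, Matrix.mul_nonsing_inv _ (isUnit_iff_ne_zero.2 hdet),
      Matrix.one_mulVec]
  · intro σ hσ
    have hσ' := (key σ).mp hσ
    rw [← hσ', Matrix.mulVec_mulVec, Matrix.nonsing_inv_mul _ (isUnit_iff_ne_zero.2 hdet),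
      Matrix.one_mulVec]
end
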